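/- Fix a fully-connected ReLU network with L hidden layers given by weight matrices W_m and bias vectors b_m, an input x ∈ ℝ^{k_0}, and concrete bounds l_{m,k} ≤ ẑ_{m,k}(x) ≤ u_{m,k} for every hidden neuron, where ẑ_{m,k}(x) denotes the exact pre-activation value of neuron k in layer m on input x. Then an assignment of values (ẑ_{m,k}, z_{m,k}) with z_{0} = x satisfies the affine constraints ẑ_{m,k} = b_{m,k} + Σ_{k'} w_{m,k,k'}·z_{m−1,k'} together with, for some boolean values a_{m,k} ∈ {0, 1}, the big-M constraints z_{m,k} ≥ 0, z_{m,k} ≥ ẑ_{m,k}, z_{m,k} ≤ u_{m,k}·a_{m,k}, z_{m,k} ≤ ẑ_{m,k} − l_{m,k}·(1 − a_{m,k}) for all m, k, if and only if for all m, k: ẑ_{m,k} = ẑ_{m,k}(x) and z_{m,k} = ReLU(ẑ_{m,k}(x)). (The big-M MIP constraints exactly characterize the network's forward computation.) -/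

import Mathlib

/-!
Each neuron is handled separately. If `a ∈ {0, 1}`, the big-M constraints force `z = 0 ≥ ẑ`
when `a = 0` and `z = ẑ ≥ 0` when `a = 1`, so `z = max ẑ 0` whatever `l` and `u` are;
conversely `a := [0 ≤ ẑ]` satisfies them as soon as `l ≤ ẑ ≤ u`. Along the network, the
affine constraints then propagate `z_m = netPost m` layer by layer from `z_0 = x`.
-/

noncomputable def netPost (k : ℕ → ℕ)
    (w : ∀ m, Fin (k (m + 1)) → Fin (k m) → ℝ)
    (b : ∀ m, Fin (k (m + 1)) → ℝ)
    (x : Fin (k 0) → ℝ) : (m : ℕ) → Fin (k m) → ℝ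
  | 0 => x
  | m + 1 => fun j => max (b m j + ∑ i, w m j i * netPost k w b x m i) 0

/-- Exact pre-activation value `ẑ_{m+1,j}(x)` of neuron `j` in layer `m+1` on input `x`. -/
noncomputable def netPre (k : ℕ → ℕ)
    (w : ∀ m, Fin (k (m + 1)) → Fin (k m) → ℝ)
    (b : ∀ m, Fin (k (m + 1)) → ℝ)
    (x : Fin (k 0) → ℝ) (m : ℕ) (j : Fin (k (m + 1))) : ℝ :=
  b m j + ∑ i, w m j i * netPost k w b x m i

def BigMConstraints (l u zhat z a : ℝ) : Prop :=
  (a = 0 ∨ a = 1) ∧ z ≥ 0 ∧ z ≥ zhat ∧ z ≤ u * a ∧ z ≤ zhat - l * (1 - a)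

section BigM

variable {l u zhat z a : ℝ}

theorem BigMConstraints.eq_max (h : BigMConstraints l u zhat z a) : z = max zhat 0 := by
  obtain ⟨ha | ha, hz_nonneg, hz_ge, hz_le_u, hz_le_l⟩ := h <;> subst ha
  · have hz : z = 0 := le_antisymm (by simpa using hz_le_u) hz_nonneg
    rw [hz, max_eq_right (hz ▸ hz_ge)]
  · have hz : z = zhat := le_antisymm (by simpa using hz_le_l) hz_ge
    rw [hz, max_eq_left (hz ▸ hz_nonneg)]

theorem bigMConstraints_max (hl : l ≤ zhat) (hu : zhat ≤ u) :
    BigMConstraints l u zhat (max zhat 0) (if 0 ≤ zhat then 1 else 0) := by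
  by_cases hpos : 0 ≤ zhat
  · rw [if_pos hpos, max_eq_left hpos]
    exact ⟨Or.inr rfl, hpos, le_rfl, by linarith, by linarith⟩
  · rw [if_neg hpos, max_eq_right (le_of_not_ge hpos)]
    exact ⟨Or.inl rfl, le_rfl, le_of_not_ge hpos, by linarith, by linarith⟩

end BigM

section Network

variable {k : ℕ → ℕ} {w : ∀ m, Fin (k (m + 1)) → Fin (k m) → ℝ} {b : ∀ m, Fin (k (m + 1)) → ℝ}
  {x : Fin (k 0) → ℝ}

theorem netPost_succ_apply (m : ℕ) (j : Fin (k (m + 1))) :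
    netPost k w b x (m + 1) j = max (netPre k w b x m j) 0 :=
  rfl

theorem affine_eq_netPre {m : ℕ} {v : Fin (k m) → ℝ} (hv : v = netPost k w b x m)
    (j : Fin (k (m + 1))) : b m j + ∑ i, w m j i * v i = netPre k w b x m j := by
  rw [hv, netPre]

theorem eq_netPost_of_forward {L : ℕ} {z : ∀ m, Fin (k m) → ℝ} (hz0 : z 0 = x)
    (hstep : ∀ m, m < L → ∀ j, z (m + 1) j = max (b m j + ∑ i, w m j i * z m i) 0) :
    ∀ m, m ≤ L → z m = netPost k w b x m := by
  intro m hm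
  induction m with
  | zero => exact hz0
  | succ m ih =>
    funext j
    rw [hstep m hm j, affine_eq_netPre (ih (Nat.le_of_succ_le hm)), netPost_succ_apply]

end Network

/-- The big-M MIP constraints exactly characterize the network's forward computation:
given valid concrete bounds at `x`, an assignment `(ẑ, z)` with `z 0 = x` satisfies the
affine constraints together with (for some boolean values `a`) the big-M constraints at
every hidden neuron, if and only if `ẑ` and `z` coincide with the exact pre-activation
values and their ReLUs. -/
theorem bigM_network_characterization
    (L : ℕ) (k : ℕ → ℕ)
    (w : ∀ m, Fin (k (m + 1)) → Fin (k m) → ℝ)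
    (b : ∀ m, Fin (k (m + 1)) → ℝ)
    (x : Fin (k 0) → ℝ)
    (l u : ∀ m, Fin (k (m + 1)) → ℝ)
    (hbounds : ∀ m, m < L → ∀ j, l m j ≤ netPre k w b x m j ∧ netPre k w b x m j ≤ u m j)
    (zhat : ∀ m, Fin (k (m + 1)) → ℝ)
    (z : ∀ m, Fin (k m) → ℝ)
    (hz0 : z 0 = x) :
    ((∀ m, m < L → ∀ j, zhat m j = b m j + ∑ i, w m j i * z m i) ∧
      ∃ a : ∀ m, Fin (k (m + 1)) → ℝ,
        ∀ m, m < L → ∀ j,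
          (a m j = 0 ∨ a m j = 1) ∧
          z (m + 1) j ≥ 0 ∧
          z (m + 1) j ≥ zhat m j ∧
          z (m + 1) j ≤ u m j * a m j ∧
          z (m + 1) j ≤ zhat m j - l m j * (1 - a m j)) ↔
    (∀ m, m < L → ∀ j,
      zhat m j = netPre k w b x m j ∧ z (m + 1) j = max (netPre k w b x m j) 0) := by
  constructor
  · rintro ⟨haffine, a, hbigM⟩ m hm j
    have hforward : ∀ m, m ≤ L → z m = netPost k w b x m :=
      eq_netPost_of_forward hz0 fun m hm j => by
        rw [← haffine m hm j]
        exact BigMConstraints.eq_max (hbigM m hm j)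
    refine ⟨(haffine m hm j).trans (affine_eq_netPre (hforward m hm.le) j), ?_⟩
    rw [hforward (m + 1) hm, netPost_succ_apply]
  · intro hexact
    have hlayer : ∀ m, m ≤ L → z m = netPost k w b x m
      | 0, _ => hz0
      | m + 1, hm => funext fun j => (hexact m hm j).2
    refine ⟨fun m hm j => (hexact m hm j).1.trans (affine_eq_netPre (hlayer m hm.le) j).symm,
      fun m j => if 0 ≤ netPre k w b x m j then 1 else 0, fun m hm j => ?_⟩
    rw [(hexact m hm j).1, (hexact m hm j).2]
    exact bigMConstraints_max (hbounds m hm j).1 (hbounds m hm j).2
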